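/- (Tree-like property of σ-special sequences) With σ an injective coding as above, if (E_i,2j_i)_{i=1}^n and (F_l,2k_l)_{l=1}^m are two σ-special sequences, then either j_i ≠ k_l for all i ≤ n and l ≤ m, or there exists d ≤ min{n,m} such that (E_i,2j_i) = (F_i,2k_i) for all i ≤ d−1, j_d = k_d but E_d ≠ F_d (or the sequences agree up to position d), and j_i ≠ k_l for all i, l with d+1 ≤ i ≤ n, d+1 ≤ l ≤ m. -/

import Mathlib

/-- The sequence `m_j`: `m_0 = m_1 = 2`, `m_{j+1} = m_j^3`. -/
def mseq : ℕ → ℕ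
  | 0 => 2
  | 1 => 2
  | (j+2) => (mseq (j+1)) ^ 3

/-- Membership in the set `Σ` of candidate special sequences: a nonempty finite list of
pairs `(E_i, j_i)` with the `E_i` pairwise disjoint nonempty finite sets, the `j_i`
strictly increasing, `j_1 ∈ N_1` and `j_i ∈ N_2` for `i > 1`. -/
def InSigma (N1 N2 : Set ℕ) (l : List (Finset ℕ × ℕ)) : Prop :=
  l ≠ [] ∧
  l.Pairwise (fun a b => Disjoint a.1 b.1) ∧
  l.Chain' (fun a b => a.2 < b.2) ∧
  (∀ a ∈ l.head?, a.2 ∈ N1) ∧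
  (∀ a ∈ l.tail, a.2 ∈ N2) ∧
  (∀ a ∈ l, a.1.Nonempty)

/-- `l` is a `σ`-special sequence: it lies in `Σ` and `σ` of each proper initial
segment gives the next index. -/
def IsSpecial (N1 N2 : Set ℕ) (σ : List (Finset ℕ × ℕ) → ℕ)
    (l : List (Finset ℕ × ℕ)) : Prop :=
  InSigma N1 N2 l ∧
  ∀ (i : ℕ) (h : i + 1 < l.length), σ (l.take (i + 1)) = (l.get ⟨i + 1, h⟩).2

/-- `σ` is an admissible coding: it maps `Σ` into `N_2`, is injective on `Σ`, its values
dominate the indices appearing in the sequence, and it satisfies the growth condition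
`m_{2σ(s⌢(E,j))} > m_{2σ(s)}·(max E_last)^2`. -/
def GoodCoding (N1 N2 : Set ℕ) (σ : List (Finset ℕ × ℕ) → ℕ) : Prop :=
  (∀ l, InSigma N1 N2 l → σ l ∈ N2) ∧
  (∀ l l', InSigma N1 N2 l → InSigma N1 N2 l' → σ l = σ l' → l = l') ∧
  (∀ l, InSigma N1 N2 l → ∀ a ∈ l, a.2 < σ l) ∧
  (∀ (l : List (Finset ℕ × ℕ)) (a : Finset ℕ × ℕ) (h : l ≠ []),
      InSigma N1 N2 l → InSigma N1 N2 (l ++ [a]) →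
      mseq (2 * σ l) * (sSup {k | k ∈ (l.getLast h).1}) ^ 2 < mseq (2 * σ (l ++ [a])))


namespace InSigma

variable {N1 N2 : Set ℕ} {l : List (Finset ℕ × ℕ)}

theorem take (h : InSigma N1 N2 l) {k : ℕ} (hk : k ≠ 0) : InSigma N1 N2 (l.take k) := by
  obtain ⟨hne, hdisj, hchain, hhead, htail, hnonempty⟩ := h
  obtain ⟨a, t, rfl⟩ := List.exists_cons_of_ne_nil hne
  obtain ⟨k, rfl⟩ := Nat.exists_eq_succ_of_ne_zero hk
  refine ⟨by simp, hdisj.sublist (List.take_sublist _ _), hchain.take _, by simpa using hhead,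
    fun b hb => htail b ?_, fun b hb => hnonempty b (List.mem_of_mem_take hb)⟩
  simp only [List.take_succ_cons, List.tail_cons] at hb ⊢
  exact List.mem_of_mem_take hb

theorem snd_getElem_zero_mem (h : InSigma N1 N2 l) (h0 : 0 < l.length) : l[0].2 ∈ N1 :=
  h.2.2.2.1 _ (by simp [List.head?_eq_getElem?, List.getElem?_eq_getElem h0])

theorem snd_getElem_succ_mem (h : InSigma N1 N2 l) {i : ℕ} (hi : i + 1 < l.length) :
    l[i + 1].2 ∈ N2 :=
  h.2.2.2.2.1 _ <| by
    rw [← List.getElem_tail (by rw [List.length_tail]; omega)]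
    exact List.getElem_mem _

end InSigma

namespace IsSpecial

variable {N1 N2 : Set ℕ} {σ : List (Finset ℕ × ℕ) → ℕ} {l₁ l₂ : List (Finset ℕ × ℕ)}

/-- The first index lies in `N1` and all later ones in `N2`, and a later index is the
`σ`-code of the prefix before it, which injectivity of `σ` recovers. -/
theorem eq_and_take_eq_of_snd_eq (hN : Disjoint N1 N2) (hσ : Set.InjOn σ {l | InSigma N1 N2 l})
    (h₁ : IsSpecial N1 N2 σ l₁) (h₂ : IsSpecial N1 N2 σ l₂) {i j : ℕ} (hi : i < l₁.length)
    (hj : j < l₂.length) (heq : l₁[i].2 = l₂[j].2) : i = j ∧ l₁.take i = l₂.take i := by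
  match i, j with
  | 0, 0 => exact ⟨rfl, rfl⟩
  | 0, j + 1 =>
    exact (Set.disjoint_left.mp hN (heq ▸ h₁.1.snd_getElem_zero_mem hi)
      (h₂.1.snd_getElem_succ_mem hj)).elim
  | i + 1, 0 =>
    exact (Set.disjoint_left.mp hN (heq ▸ h₂.1.snd_getElem_zero_mem hj)
      (h₁.1.snd_getElem_succ_mem hi)).elim
  | i + 1, j + 1 =>
    have hcode : σ (l₁.take (i + 1)) = σ (l₂.take (j + 1)) := by
      simpa [h₁.2 i hi, h₂.2 j hj] using heq
    have htake : l₁.take (i + 1) = l₂.take (j + 1) :=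
      hσ (h₁.1.take i.succ_ne_zero) (h₂.1.take j.succ_ne_zero) hcode
    have hij : i + 1 = j + 1 := by
      simpa [Nat.min_eq_left hi.le, Nat.min_eq_left hj.le] using congrArg List.length htake
    exact ⟨hij, hij ▸ htake⟩

end IsSpecial

/-- **Tree-like property.** If `l₁` and `l₂` are two `σ`-special
sequences, then either all their indices are distinct, or there is `d` such that the
sequences agree before position `d`, have equal `d`-th index, and all indices strictly
after position `d` are pairwise distinct. -/
theorem sigma_special_tree_like (N1 N2 : Set ℕ) (σ : List (Finset ℕ × ℕ) → ℕ)
    (hdisjN : Disjoint N1 N2)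
    (hσ : GoodCoding N1 N2 σ)
    (l₁ l₂ : List (Finset ℕ × ℕ))
    (h1 : IsSpecial N1 N2 σ l₁) (h2 : IsSpecial N1 N2 σ l₂) :
    (∀ (i : Fin l₁.length) (j : Fin l₂.length), (l₁.get i).2 ≠ (l₂.get j).2) ∨
    ∃ (d : ℕ) (hd1 : d < l₁.length) (hd2 : d < l₂.length),
      l₁.take d = l₂.take d ∧
      (l₁.get ⟨d, hd1⟩).2 = (l₂.get ⟨d, hd2⟩).2 ∧
      ∀ (i : Fin l₁.length) (j : Fin l₂.length), d < (i : ℕ) → d < (j : ℕ) →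
        (l₁.get i).2 ≠ (l₂.get j).2 := by
  have hinj : Set.InjOn σ {l | InSigma N1 N2 l} := fun l hl l' hl' => hσ.2.1 l l' hl hl'
  have hcollision {i j : ℕ} (hi : i < l₁.length) (hj : j < l₂.length) :=
    h1.eq_and_take_eq_of_snd_eq hdisjN hinj h2 hi hj
  by_cases hnone : ∀ (i : Fin l₁.length) (j : Fin l₂.length), (l₁.get i).2 ≠ (l₂.get j).2
  · exact .inl hnone
  right
  push Not at hnone
  obtain ⟨i, j, hij⟩ := hnone
  -- `d` is the last position at which the two sequences share their index.
  let P (d : ℕ) : Prop := ∃ (hd1 : d < l₁.length) (hd2 : d < l₂.length), l₁[d].2 = l₂[d].2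
  have hP {i j : ℕ} (hi : i < l₁.length) (hj : j < l₂.length) (h : l₁[i].2 = l₂[j].2) : P i := by
    obtain rfl := (hcollision hi hj h).1
    exact ⟨hi, hj, h⟩
  obtain ⟨hd1, hd2, hd⟩ : P (Nat.findGreatest P l₁.length) :=
    Nat.findGreatest_spec i.isLt.le (hP i.isLt j.isLt (by simpa using hij))
  refine ⟨_, hd1, hd2, (hcollision hd1 hd2 hd).2, by simpa using hd, fun i' j' hi' _ h => ?_⟩
  exact Nat.findGreatest_is_greatest hi' i'.isLt.le (hP i'.isLt j'.isLt (by simpa using h))
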